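/- Let M be a 3-connected matroid, and let (P_1, …, P_m) be a partition of E(M) with m ≥ 2 such that |P_1| ≥ 2 and, for all i ∈ {2, …, m} and j ∈ [m] − {i}, the set P_i is a triad and r(P_i ∪ P_j) = r(P_j) + 1. Then (P_1, …, P_m) is a paddle of M: every union of petals Y = ∪_{i∈J} P_i for ∅ ≠ J ⊊ [m] satisfies λ(Y) = 2, and ∏(P_i, P_j) = 2 for all distinct i, j. -/

import Mathlib

open Matroid Set

namespace DetPairs

variable {α : Type*}

/-- The rank of a set in a matroid: the maximum size of an independent subset
(as an integer, for convenient arithmetic). -/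
noncomputable def r (M : Matroid α) (X : Set α) : ℤ :=
  ((sSup (Set.ncard '' {I | M.Indep I ∧ I ⊆ X}) : ℕ) : ℤ)

/-- The connectivity function `λ_M(X) = r(X) + r(E − X) − r(M)`. -/
noncomputable def lam (M : Matroid α) (X : Set α) : ℤ :=
  r M X + r M (M.E \ X) - r M M.E

/-- Local connectivity `⊓(X,Y) = r(X) + r(Y) − r(X ∪ Y)`. -/
noncomputable def localConn (M : Matroid α) (X Y : Set α) : ℤ :=
  r M X + r M Y - r M (X ∪ Y)

/-- A circuit: a minimal dependent set. -/
def Circuit (M : Matroid α) (C : Set α) : Prop :=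
  C ⊆ M.E ∧ ¬ M.Indep C ∧ ∀ D, D ⊂ C → M.Indep D

/-- A cocircuit: a circuit of the dual. -/
def Cocircuit (M : Matroid α) (C : Set α) : Prop := Circuit M✶ C

/-- A triangle: a 3-element circuit. -/
def Triangle (M : Matroid α) (T : Set α) : Prop := Circuit M T ∧ T.ncard = 3

/-- A triad: a 3-element cocircuit. -/
def Triad (M : Matroid α) (T : Set α) : Prop := Cocircuit M T ∧ T.ncard = 3

/-- A quad: a 4-element set that is both a circuit and a cocircuit. -/
def Quad (M : Matroid α) (Q : Set α) : Prop :=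
  Circuit M Q ∧ Cocircuit M Q ∧ Q.ncard = 4

/-- Deletion of a set of elements. -/
def Del (M : Matroid α) (D : Set α) : Matroid α := M ↾ (M.E \ D)

/-- Contraction of a set of elements. -/
def Con (M : Matroid α) (C : Set α) : Matroid α := (M✶ ↾ (M.E \ C))✶

/-- `M` is 3-connected: it has no `k`-separation for `k = 1, 2`, where a
`k`-separation is a set `X` with `λ(X) = k − 1`, `|X| ≥ k` and `|E − X| ≥ k`. -/
def ThreeConnected (M : Matroid α) : Prop :=
  ∀ k : ℕ, 0 < k → k < 3 → ∀ X ⊆ M.E,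
    ¬ (lam M X = (k : ℤ) - 1 ∧ (k : ℤ) ≤ X.ncard ∧ (k : ℤ) ≤ (M.E \ X).ncard)

/-- A detachable pair: distinct elements `e, f` such that `M \ e \ f` or
`M / e / f` is 3-connected. -/
def DetachablePair (M : Matroid α) (e f : α) : Prop :=
  e ≠ f ∧ e ∈ M.E ∧ f ∈ M.E ∧
    (ThreeConnected (Del M {e, f}) ∨ ThreeConnected (Con M {e, f}))

/-- The triple of elements with indices `i, i+1, i+2` in an ordering. -/
def tri (e : ℕ → α) (i : ℕ) : Set α := {e i, e (i + 1), e (i + 2)}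

/-- `(e 0, …, e (n-1))` is a fan ordering of length `n ≥ 3` in `M`:
consecutive triples alternate between triangles and triads. -/
def FanOrd (M : Matroid α) (n : ℕ) (e : ℕ → α) : Prop :=
  3 ≤ n ∧ Set.InjOn e (Set.Iio n) ∧ (∀ i < n, e i ∈ M.E) ∧
    (Triangle M (tri e 0) ∨ Triad M (tri e 0)) ∧
    ∀ i, i + 3 < n →
      (Triangle M (tri e i) → Triad M (tri e (i + 1))) ∧
      (Triad M (tri e i) → Triangle M (tri e (i + 1)))

/-- A fan (as a set): either a 2-element subset of the ground set, or the
underlying set of a fan ordering of length at least 3. -/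
def IsFan (M : Matroid α) (F : Set α) : Prop :=
  (F ⊆ M.E ∧ F.ncard = 2) ∨ ∃ n e, FanOrd M n e ∧ F = e '' Set.Iio n

/-- A maximal fan: a fan contained in no strictly larger fan. -/
def MaximalFan (M : Matroid α) (F : Set α) : Prop :=
  IsFan M F ∧ ∀ F', IsFan M F' → F ⊆ F' → F' = F

/-- `M` is a wheel or a whirl: its ground set has a cyclic ordering of even size
`2n` in which consecutive triples alternate between triangles and triads. -/
def IsWheelOrWhirl (M : Matroid α) : Prop :=
  ∃ (n : ℕ) (e : ℕ → α), 2 ≤ n ∧ Set.InjOn e (Set.Iio (2 * n)) ∧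
    M.E = e '' Set.Iio (2 * n) ∧
    ∀ i < 2 * n,
      (i % 2 = 0 → Triangle M {e i, e ((i + 1) % (2 * n)), e ((i + 2) % (2 * n))}) ∧
      (i % 2 = 1 → Triad M {e i, e ((i + 1) % (2 * n)), e ((i + 2) % (2 * n))})

/-- An `M(K₄)`-separator: a 6-element set `{a,b,c,x,y,z}` where `{x,y,z}` is a
triad and `{a,b,c}`, `{a,x,y}`, `{b,x,z}`, `{c,y,z}` are triangles. -/
def MK4Sep (M : Matroid α) (S : Set α) : Prop :=
  ∃ a b c x y z : α, S = {a, b, c, x, y, z} ∧ S.ncard = 6 ∧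
    Triad M {x, y, z} ∧ Triangle M {a, b, c} ∧ Triangle M {a, x, y} ∧
    Triangle M {b, x, z} ∧ Triangle M {c, y, z}

/-- A vertical 3-separation `(X, {e}, Y)` of `M`. -/
def VertThreeSep (M : Matroid α) (X : Set α) (e : α) (Y : Set α) : Prop :=
  X ∪ {e} ∪ Y = M.E ∧ Disjoint X Y ∧ e ∉ X ∧ e ∉ Y ∧
    lam M X = 2 ∧ lam M Y = 2 ∧ e ∈ M.closure X ∧ e ∈ M.closure Y ∧
    3 ≤ r M X ∧ 3 ≤ r M Y

/-- `N` is a simplification of `M`: a restriction of `M` to a set of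
representatives, one from each parallel class of nonloops. -/
def SimplificationOf (M N : Matroid α) : Prop :=
  ∃ X : Set α, (∀ x ∈ X, x ∈ M.E ∧ x ∉ M.closure ∅) ∧ N = M ↾ X ∧
    ∀ y ∈ M.E, y ∉ M.closure ∅ →
      ∃! x, x ∈ X ∧ M.closure {y} = M.closure {x}

/-! Every triad `P i` (`i > 0`) is a cocircuit, so `E − P i` is a hyperplane, and 3-connectivity
forces `r(P i) = 3`. Adding a triad `P i` to a union `A` of other petals that contains some `P j`
raises the rank by exactly one: by at most one, by submodularity and `r(P i ∪ P j) = r(P j) + 1`;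
by at least one, because `A` lies in the hyperplane `E − P i`. Hence
`r(⋃_{i ∈ J} P i) = r(P j) + |J| − 1` whenever all petals of `J` other than `P j` are
triads, and both `λ` and `⊓` are read off from this formula together with `r(P i) = 3`. -/

variable {M : Matroid α} {X Y A Q T : Set α}

lemma r_eq_toNat_eRk [M.RankFinite] (X : Set α) : r M X = (M.eRk X).toNat := by
  obtain ⟨I, hI⟩ := M.exists_isBasis' X
  have hmax : IsGreatest (ncard '' {J | M.Indep J ∧ J ⊆ X}) I.ncard := by
    refine ⟨⟨I, ⟨hI.indep, hI.subset⟩, rfl⟩, ?_⟩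
    rintro _ ⟨J, ⟨hJ, hJX⟩, rfl⟩
    rw [ncard_def, ncard_def, hI.encard_eq_eRk]
    exact ENat.toNat_le_toNat (hJ.encard_le_eRk_of_subset hJX) (M.isRkFinite_set X).eRk_lt_top.ne
  rw [r, hmax.csSup_eq, ncard_def, hI.encard_eq_eRk]

lemma r_nonneg (M : Matroid α) (X : Set α) : 0 ≤ r M X := Int.natCast_nonneg _

lemma r_mono [M.RankFinite] (h : X ⊆ Y) : r M X ≤ r M Y := by
  rw [r_eq_toNat_eRk, r_eq_toNat_eRk]
  exact_mod_cast ENat.toNat_le_toNat (M.eRk_mono h) (M.isRkFinite_set Y).eRk_lt_top.ne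

lemma r_le_ncard [M.RankFinite] (hX : X.Finite) : r M X ≤ X.ncard := by
  rw [r_eq_toNat_eRk, ncard_def]
  exact_mod_cast ENat.toNat_le_toNat (M.eRk_le_encard X) hX.encard_lt_top.ne

lemma r_inter_add_r_union_le (M : Matroid α) [M.RankFinite] (X Y : Set α) :
    r M (X ∩ Y) + r M (X ∪ Y) ≤ r M X + r M Y := by
  have hfin : ∀ Z, M.eRk Z ≠ ⊤ := fun Z ↦ (M.isRkFinite_set Z).eRk_lt_top.ne
  simp only [r_eq_toNat_eRk]
  have := ENat.toNat_le_toNat (M.eRk_inter_add_eRk_union_le X Y) (by simp [hfin])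
  rw [ENat.toNat_add (hfin _) (hfin _), ENat.toNat_add (hfin _) (hfin _)] at this
  exact_mod_cast this

lemma Cocircuit.eRk_compl_add_one [M.RankFinite] (hT : Cocircuit M T) :
    M.eRk (M.E \ T) + 1 = M.eRank := by
  obtain ⟨hTE, hdep, hmin⟩ := hT
  rw [dual_ground] at hTE
  obtain ⟨e, he⟩ : T.Nonempty :=
    nonempty_iff_ne_empty.2 (by rintro rfl; exact hdep M✶.empty_indep)
  have hnsp : ¬ M.Spanning (M.E \ T) := fun h ↦ hdep ((coindep_iff_compl_spanning hTE).2 h)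
  have hsp : M.Spanning (insert e (M.E \ T)) := by
    have := (coindep_iff_compl_spanning (sdiff_subset.trans hTE)).1
      (hmin (T \ {e}) (sdiff_singleton_ssubset.2 he))
    rwa [sdiff_sdiff_right, inter_singleton_of_mem (hTE he), union_singleton] at this
  refine le_antisymm (Order.add_one_le_of_lt ?_) ?_
  · rw [spanning_iff_eRk_le] at hnsp
    exact not_le.1 hnsp
  · rw [← hsp.eRk_eq]
    exact M.eRk_insert_le_add_one e _

lemma Cocircuit.r_compl_add_one [M.RankFinite] (hT : Cocircuit M T) :
    r M (M.E \ T) + 1 = r M M.E := by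
  rw [r_eq_toNat_eRk, r_eq_toNat_eRk, eRk_ground, ← hT.eRk_compl_add_one,
    ENat.toNat_add (M.isRkFinite_set _).eRk_lt_top.ne ENat.one_ne_top]
  simp

lemma Cocircuit.r_add_one_le_r_union [M.RankFinite] (hT : Cocircuit M T) (hA : A ⊆ M.E \ T) :
    r M A + 1 ≤ r M (A ∪ T) := by
  have hsub := r_inter_add_r_union_le M (A ∪ T) (M.E \ T)
  have hcap : (A ∪ T) ∩ (M.E \ T) = A := by
    rw [union_inter_distrib_right, inter_eq_left.2 hA, inter_sdiff_self, union_empty]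
  have hcup : M.E ⊆ (A ∪ T) ∪ (M.E \ T) := fun x hx ↦ by
    by_cases hxT : x ∈ T
    · exact Or.inl (Or.inr hxT)
    · exact Or.inr ⟨hx, hxT⟩
  rw [hcap] at hsub
  have := r_mono (M := M) hcup
  have := hT.r_compl_add_one
  omega

lemma r_union_add_r_le_of_subset [M.RankFinite] (hQA : Q ⊆ A) (T : Set α) :
    r M (A ∪ T) + r M Q ≤ r M A + r M (T ∪ Q) := by
  have hsub := r_inter_add_r_union_le M A (T ∪ Q)
  rw [← union_assoc, union_eq_self_of_subset_right (hQA.trans subset_union_left)] at hsub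
  have := r_mono (M := M) (subset_inter hQA (subset_union_right (s := T)))
  omega

lemma Cocircuit.r_union_eq_add_one [M.RankFinite] (hT : Cocircuit M T) (hA : A ⊆ M.E \ T)
    (hQA : Q ⊆ A) (hQ : r M (T ∪ Q) = r M Q + 1) : r M (A ∪ T) = r M A + 1 := by
  have := r_union_add_r_le_of_subset (M := M) hQA T
  have := hT.r_add_one_le_r_union hA
  omega

lemma ThreeConnected.r_eq_three_of_triad [M.RankFinite] (hM : ThreeConnected M) (hT : Triad M T)
    (hcompl : 2 ≤ (M.E \ T).ncard) : r M T = 3 := by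
  obtain ⟨hcoc, hcard⟩ := hT
  have hTE : T ⊆ M.E := hcoc.1
  have hle : r M T ≤ 3 := by
    have := r_le_ncard (M := M) (finite_of_ncard_ne_zero (s := T) (by omega))
    omega
  have hcompl_r := hcoc.r_compl_add_one
  have hsub := r_inter_add_r_union_le M T (M.E \ T)
  rw [union_sdiff_cancel hTE] at hsub
  have := r_nonneg M (T ∩ (M.E \ T))
  have hlam : lam M T = r M T - 1 := by unfold lam; omega
  -- otherwise `T` is an `r(T)`-separation
  by_contra hne
  have hk : ((r M T).toNat : ℤ) = r M T := Int.toNat_of_nonneg (r_nonneg M T)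
  exact hM (r M T).toNat (by omega) (by omega) T hTE ⟨by omega, by omega, by omega⟩

lemma r_union_biUnion_of_cocircuits [M.RankFinite] {ι : Type*} {P : ι → Set α} {K : Set ι}
    (hK : K.Finite) (hQE : Q ⊆ M.E) (hdisj : K.PairwiseDisjoint P)
    (hQdisj : ∀ i ∈ K, Disjoint (P i) Q) (hcoc : ∀ i ∈ K, Cocircuit M (P i))
    (hrank : ∀ i ∈ K, r M (P i ∪ Q) = r M Q + 1) :
    r M (Q ∪ ⋃ i ∈ K, P i) = r M Q + K.ncard := by
  induction K, hK using Set.Finite.induction_on with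
  | empty => simp
  | @insert i K hiK hK ih =>
    have hKsub : K ⊆ insert i K := subset_insert i K
    set A := Q ∪ ⋃ j ∈ K, P j
    have hAE : A ⊆ M.E \ P i := by
      refine subset_sdiff.2
        ⟨union_subset hQE (iUnion₂_subset fun j hj ↦ (hcoc j (hKsub hj)).1), ?_⟩
      refine disjoint_union_left.2 ⟨(hQdisj i (mem_insert i K)).symm, ?_⟩
      exact disjoint_iUnion₂_left.2 fun j hj ↦
        hdisj (hKsub hj) (mem_insert i K) (ne_of_mem_of_not_mem hj hiK)
    have hA : r M (A ∪ P i) = r M A + 1 :=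
      (hcoc i (mem_insert i K)).r_union_eq_add_one hAE subset_union_left (hrank i (mem_insert i K))
    have hIH : r M A = r M Q + K.ncard := ih (hdisj.subset hKsub) (fun j hj ↦ hQdisj j (hKsub hj))
      (fun j hj ↦ hcoc j (hKsub hj)) (fun j hj ↦ hrank j (hKsub hj))
    rw [biUnion_insert, union_left_comm, union_comm, hA, hIH, ncard_insert_of_notMem hiK hK]
    push_cast
    ring

lemma r_biUnion_of_cocircuits [M.RankFinite] {ι : Type*} {P : ι → Set α} {J : Set ι}
    (hJ : J.Finite) {j : ι} (hj : j ∈ J) (hPj : P j ⊆ M.E) (hdisj : J.PairwiseDisjoint P)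
    (hcoc : ∀ i ∈ J, i ≠ j → Cocircuit M (P i))
    (hrank : ∀ i ∈ J, i ≠ j → r M (P i ∪ P j) = r M (P j) + 1) :
    r M (⋃ i ∈ J, P i) = r M (P j) + J.ncard - 1 := by
  have hJj : (⋃ i ∈ J, P i) = P j ∪ ⋃ i ∈ J \ {j}, P i := by
    rw [← biUnion_insert, insert_sdiff_singleton, insert_eq_of_mem hj]
  have hK := r_union_biUnion_of_cocircuits (K := J \ {j}) hJ.sdiff hPj
    (hdisj.subset sdiff_subset)
    (fun i hi ↦ hdisj hi.1 hj hi.2)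
    (fun i hi ↦ hcoc i hi.1 hi.2) (fun i hi ↦ hrank i hi.1 hi.2)
  have hcard := ncard_sdiff_singleton_add_one hj hJ
  rw [hJj, hK]
  omega

lemma lam_biUnion_eq_two {m : ℕ} {P : ℕ → Set α} (hdisj : (Iio m).PairwiseDisjoint P)
    (hunion : (⋃ i ∈ Iio m, P i) = M.E) (hr3 : ∀ i, 0 < i → i < m → r M (P i) = 3)
    (hrU : ∀ J ⊆ Iio m, ∀ j ∈ J, (∀ i ∈ J, i ≠ j → 0 < i) →
      r M (⋃ i ∈ J, P i) = r M (P j) + J.ncard - 1)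
    {J : Set ℕ} (hJ : J ⊆ Iio m) (hJne : J.Nonempty) (hJm : J ≠ Iio m) :
    lam M (⋃ i ∈ J, P i) = 2 := by
  set K := Iio m \ J
  have hKne : K.Nonempty := nonempty_of_ssubset (ssubset_iff_subset_ne.2 ⟨hJ, hJm⟩)
  have hcompl : M.E \ ⋃ i ∈ J, P i = ⋃ i ∈ K, P i := by
    rw [← hunion, biUnion_sdiff_biUnion_eq (by rwa [union_eq_self_of_subset_right hJ])]
  have hcard : K.ncard + J.ncard = m := by
    rw [ncard_sdiff_add_ncard_of_subset hJ, ncard_Iio_nat]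
  have hm0 : 0 < m := hJne.elim fun j hj ↦ (Nat.zero_le j).trans_lt (hJ hj)
  have hrE : r M M.E = r M (P 0) + m - 1 := by
    rw [← hunion, hrU (Iio m) subset_rfl 0 hm0 fun i _ hi ↦ Nat.pos_of_ne_zero hi,
      ncard_Iio_nat]
  rw [lam, hcompl, hrE]
  by_cases h0 : 0 ∈ J
  · obtain ⟨k, hk⟩ := hKne
    have hpos : ∀ i ∈ K, 0 < i := fun i hi ↦ Nat.pos_of_ne_zero (by rintro rfl; exact hi.2 h0)
    rw [hrU J hJ 0 h0 fun i _ hi ↦ Nat.pos_of_ne_zero hi, hrU K sdiff_subset k hk fun i hi _ ↦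
      hpos i hi, hr3 k (hpos k hk) hk.1]
    omega
  · obtain ⟨j, hj⟩ := hJne
    have hpos : ∀ i ∈ J, 0 < i := fun i hi ↦ Nat.pos_of_ne_zero (by rintro rfl; exact h0 hi)
    rw [hrU J hJ j hj fun i hi _ ↦ hpos i hi, hrU K sdiff_subset 0 ⟨hm0, h0⟩
      fun i _ hi ↦ Nat.pos_of_ne_zero hi, hr3 j (hpos j hj) (hJ hj)]
    omega

theorem stmt15_general (M : Matroid α) [M.Finite] (hM : ThreeConnected M)
    {m : ℕ} (P : ℕ → Set α)
    (hdisj : ∀ i < m, ∀ j < m, i ≠ j → Disjoint (P i) (P j))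
    (hunion : (⋃ i ∈ Set.Iio m, P i) = M.E)
    (hP0 : 2 ≤ (P 0).ncard)
    (htriad : ∀ i, 0 < i → i < m → Triad M (P i))
    (hrank : ∀ i, 0 < i → i < m → ∀ j < m, j ≠ i →
      r M (P i ∪ P j) = r M (P j) + 1) :
    (∀ J ⊆ Set.Iio m, J.Nonempty → J ≠ Set.Iio m →
      lam M (⋃ i ∈ J, P i) = 2) ∧
    (∀ i < m, ∀ j < m, i ≠ j → localConn M (P i) (P j) = 2) := by
  have hdisj' : (Iio m).PairwiseDisjoint P := fun i hi j hj hij ↦ hdisj i hi j hj hij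
  have hPE : ∀ i < m, P i ⊆ M.E := fun i hi ↦ hunion ▸ subset_biUnion_of_mem (u := P) hi
  have hr3 : ∀ i, 0 < i → i < m → r M (P i) = 3 := fun i hi him ↦
    hM.r_eq_three_of_triad (htriad i hi him) <| hP0.trans <| ncard_le_ncard
      (subset_sdiff.2 ⟨hPE 0 (by omega), hdisj 0 (by omega) i him (by omega)⟩)
      M.ground_finite.sdiff
  have hrU : ∀ J ⊆ Iio m, ∀ j ∈ J, (∀ i ∈ J, i ≠ j → 0 < i) →
      r M (⋃ i ∈ J, P i) = r M (P j) + J.ncard - 1 := fun J hJ j hj hpos ↦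
    r_biUnion_of_cocircuits ((finite_Iio m).subset hJ) hj (hPE j (hJ hj)) (hdisj'.subset hJ)
      (fun i hi hij ↦ (htriad i (hpos i hi hij) (hJ hi)).1)
      (fun i hi hij ↦ hrank i (hpos i hi hij) (hJ hi) j (hJ hj) hij.symm)
  refine ⟨fun J hJ hJne hJm ↦ lam_biUnion_eq_two hdisj' hunion hr3 hrU hJ hJne hJm,
    fun i hi j hj hij ↦ ?_⟩
  rcases Nat.eq_zero_or_pos i with rfl | hi0
  · rw [localConn, union_comm, hrank j (by omega) hj 0 hi hij, hr3 j (by omega) hj]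
    ring
  · rw [localConn, hrank i hi0 hi j hj (Ne.symm hij), hr3 i hi0 hi]
    ring

/-- A partition `(P 0, …, P (m-1))` of the ground set in which all petals other
than `P 0` are triads with `r(P i ∪ P j) = r(P j) + 1` is a paddle: every
proper nonempty union of petals is exactly 3-separating, and the local
connectivity of any two petals is 2. -/
theorem stmt15 (M : Matroid α) [M.Finite] (hM : ThreeConnected M)
    {m : ℕ} (hm : 2 ≤ m) (P : ℕ → Set α)
    (hdisj : ∀ i < m, ∀ j < m, i ≠ j → Disjoint (P i) (P j))
    (hunion : (⋃ i ∈ Set.Iio m, P i) = M.E)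
    (hP0 : 2 ≤ (P 0).ncard)
    (htriad : ∀ i, 0 < i → i < m → Triad M (P i))
    (hrank : ∀ i, 0 < i → i < m → ∀ j < m, j ≠ i →
      r M (P i ∪ P j) = r M (P j) + 1) :
    (∀ J ⊆ Set.Iio m, J.Nonempty → J ≠ Set.Iio m →
      lam M (⋃ i ∈ J, P i) = 2) ∧
    (∀ i < m, ∀ j < m, i ≠ j → localConn M (P i) (P j) = 2) :=
  stmt15_general M hM P hdisj hunion hP0 htriad hrank

end DetPairs
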